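/- Inductive step of Theorem 1. Fix k ∈ ℕ and suppose that p(s',k) ≤ v̂(ŝ',k) for every abstract state ŝ' ∈ Ŝ and every concrete state s' ∈ ŝ'. Then for every abstract state ŝ ∈ Ŝ and every s ∈ ŝ, p(s,k+1) ≤ v̂(ŝ,k+1). -/

import Mathlib

/-!
Outside the fail-labelled abstract states, a concrete state `s ∈ ŝ` lies in some piece `ŝ_j` and
is not a failure state, so `p(s, k+1)` is the `π(s,·)`-average of the `p(E(s,a), k)`. Termwise,
`π(s,a) ≤ π̂_U(ŝ_j,a)` and, as `E(s,a) ∈ Ê(ŝ_j,a)`, `p(E(s,a),k) ≤ v̂(Ê(ŝ_j,a),k)`; the first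
comparison needs `0 ≤ p`. On fail-labelled states `v̂ = 1`, and `p ≤ 1` since `p` is built from
`0`, `1` and convex combinations.
-/

theorem failureProb_mem_Icc {S A : Type*} [Fintype A] (E : S → A → S) (π : S → A → ℝ)
    (F : Set S) (hπ_nonneg : ∀ s a, 0 ≤ π s a) (hπ_sum : ∀ s, ∑ a, π s a = 1) (p : S → ℕ → ℝ)
    (hp_fail : ∀ s k, s ∈ F → p s k = 1) (hp_zero : ∀ s, s ∉ F → p s 0 = 0)
    (hp_succ : ∀ s k, s ∉ F → p s (k + 1) = ∑ a, π s a * p (E s a) k) (k : ℕ) (s : S) :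
    p s k ∈ Set.Icc (0 : ℝ) 1 := by
  induction k generalizing s with
  | zero => by_cases hs : s ∈ F <;> simp [hs, hp_fail, hp_zero]
  | succ k ih =>
    by_cases hs : s ∈ F
    · simp [hp_fail s _ hs]
    · rw [hp_succ s k hs]
      simpa only [smul_eq_mul] using
        (convex_Icc (0 : ℝ) 1).sum_mem (fun a _ => hπ_nonneg s a) (hπ_sum s)
          fun a _ => ih (E s a)

theorem imdp_abstraction_sound_inductive_step_general
    {S : Type*} {A : Type*} [Fintype A]
    (E : S → A → S) (π : S → A → ℝ) (F : Set S)
    (hπ_nonneg : ∀ s a, 0 ≤ π s a)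
    (hπ_sum : ∀ s, ∑ a, π s a = 1)
    -- the k-step failure probability of the concrete model
    (p : S → ℕ → ℝ)
    (hp_fail : ∀ s k, s ∈ F → p s k = 1)
    (hp_zero : ∀ s, s ∉ F → p s 0 = 0)
    (hp_succ : ∀ s k, s ∉ F → p s (k + 1) = ∑ a, π s a * p (E s a) k)
    -- the IMDP abstraction: a finite set of abstract states, each a subset of S
    {Shat : Type*}
    (conc : Shat → Set S)
    -- each abstract state is equipped with a finite nonempty family of pieces
    (J : Shat → Type*) [∀ sh, Fintype (J sh)] [∀ sh, Nonempty (J sh)]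
    (piece : (sh : Shat) → J sh → Set S)
    (hcover : ∀ sh, conc sh ⊆ ⋃ j, piece sh j)
    -- environment abstraction
    (Ehat : (sh : Shat) → J sh → A → Shat)
    (hEhat : ∀ sh (j : J sh) (a : A) (s : S), s ∈ piece sh j → E s a ∈ conc (Ehat sh j a))
    -- policy upper bounds
    (πU : (sh : Shat) → J sh → A → ℝ)
    (hπU_nonneg : ∀ sh (j : J sh) (a : A), 0 ≤ πU sh j a)
    (hπU : ∀ sh (j : J sh) (a : A) (s : S), s ∈ piece sh j → π s a ≤ πU sh j a)
    -- fail labelling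
    (failLab : Shat → Prop)
    (hfail : ∀ sh, (conc sh ∩ F).Nonempty → failLab sh)
    -- the abstract value
    (vhat : Shat → ℕ → ℝ)
    (hv_fail : ∀ sh k, failLab sh → vhat sh k = 1)
    (hv_succ : ∀ sh k, ¬ failLab sh →
      vhat sh (k + 1) =
        Finset.univ.sup' Finset.univ_nonempty
          (fun j : J sh => ∑ a, πU sh j a * vhat (Ehat sh j a) k))
    (k : ℕ)
    (ih : ∀ (sh' : Shat) (s' : S), s' ∈ conc sh' → p s' k ≤ vhat sh' k) :
    ∀ (sh : Shat) (s : S), s ∈ conc sh → p s (k + 1) ≤ vhat sh (k + 1) := by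
  have hp_mem := failureProb_mem_Icc E π F hπ_nonneg hπ_sum p hp_fail hp_zero hp_succ
  intro sh s hs
  by_cases hlab : failLab sh
  · rw [hv_fail sh _ hlab]
    exact (hp_mem _ s).2
  have hsF : s ∉ F := fun hsF => hlab (hfail sh ⟨s, hs, hsF⟩)
  obtain ⟨_, ⟨j, rfl⟩, hj⟩ := hcover sh hs
  rw [hp_succ s k hsF, hv_succ sh k hlab]
  refine Finset.le_sup'_of_le _ (Finset.mem_univ j) (Finset.sum_le_sum fun a _ => ?_)
  exact mul_le_mul (hπU sh j a s hj) (ih _ _ (hEhat sh j a s hj)) (hp_mem k _).1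
    (hπU_nonneg sh j a)

/-- Inductive step of Theorem 1: if the bound holds at horizon k for all abstract
states and contained concrete states, then it holds at horizon k + 1. -/
theorem imdp_abstraction_sound_inductive_step
    {S : Type*} {A : Type*} [Fintype A] [Nonempty A]
    (E : S → A → S) (π : S → A → ℝ) (F : Set S)
    (hπ_nonneg : ∀ s a, 0 ≤ π s a)
    (hπ_sum : ∀ s, ∑ a, π s a = 1)
    -- the k-step failure probability of the concrete model
    (p : S → ℕ → ℝ)
    (hp_fail : ∀ s k, s ∈ F → p s k = 1)
    (hp_zero : ∀ s, s ∉ F → p s 0 = 0)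
    (hp_succ : ∀ s k, s ∉ F → p s (k + 1) = ∑ a, π s a * p (E s a) k)
    -- the IMDP abstraction: a finite set of abstract states, each a subset of S
    {Shat : Type*} [Fintype Shat]
    (conc : Shat → Set S)
    -- each abstract state is equipped with a finite nonempty family of pieces
    (J : Shat → Type*) [∀ sh, Fintype (J sh)] [∀ sh, Nonempty (J sh)]
    (piece : (sh : Shat) → J sh → Set S)
    (hcover : ∀ sh, conc sh ⊆ ⋃ j, piece sh j)
    -- environment abstraction
    (Ehat : (sh : Shat) → J sh → A → Shat)
    (hEhat : ∀ sh (j : J sh) (a : A) (s : S), s ∈ piece sh j → E s a ∈ conc (Ehat sh j a))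
    -- policy upper bounds
    (πU : (sh : Shat) → J sh → A → ℝ)
    (hπU_nonneg : ∀ sh (j : J sh) (a : A), 0 ≤ πU sh j a)
    (hπU : ∀ sh (j : J sh) (a : A) (s : S), s ∈ piece sh j → π s a ≤ πU sh j a)
    -- fail labelling
    (failLab : Shat → Prop)
    (hfail : ∀ sh, (conc sh ∩ F).Nonempty → failLab sh)
    -- the abstract value
    (vhat : Shat → ℕ → ℝ)
    (hv_fail : ∀ sh k, failLab sh → vhat sh k = 1)
    (hv_zero : ∀ sh, ¬ failLab sh → vhat sh 0 = 0)
    (hv_succ : ∀ sh k, ¬ failLab sh →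
      vhat sh (k + 1) =
        Finset.univ.sup' Finset.univ_nonempty
          (fun j : J sh => ∑ a, πU sh j a * vhat (Ehat sh j a) k))
    (k : ℕ)
    (ih : ∀ (sh' : Shat) (s' : S), s' ∈ conc sh' → p s' k ≤ vhat sh' k) :
    ∀ (sh : Shat) (s : S), s ∈ conc sh → p s (k + 1) ≤ vhat sh (k + 1) :=
  imdp_abstraction_sound_inductive_step_general E π F hπ_nonneg hπ_sum p hp_fail hp_zero hp_succ
    conc J piece hcover Ehat hEhat πU hπU_nonneg hπU failLab hfail vhat hv_fail hv_succ k ih
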